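/- Let n ≥ 2 and let g : ℕ → ℕ be any function such that for every b ∈ ℕ and every tournament with clique number at least g(b) there is a vertex whose out-neighbourhood has clique number at least b and a vertex whose in-neighbourhood has clique number at least b. Let T be a tournament and c an integer such that every subtournament T' of T with ω⃗(T') ≥ c contains a copy of D_{n−1}. Let c_small ≥ c and c_large be integers, and let A, B be disjoint subsets of V(T) such that ω⃗(A) ≥ c_large, ω⃗(B) ≥ c_large + g((1 + |V(D_{n−1})|)·c_small), and for each v ∈ A, ω⃗(N^−(v) ∩ B) < c_small. Then either T contains D_n as a subtournament, or there exists B₂ ⊆ B with ω⃗(B₂) ≥ c_large such that for each w ∈ B₂, ω⃗(N^+(w) ∩ A) < c. -/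

import Mathlib

/-- A tournament on a vertex type `V`: an orientation of the complete graph. -/
structure Tournament (V : Type) where
  arc : V → V → Prop
  loopless : ∀ v, ¬ arc v v
  anti : ∀ u v, u ≠ v → (arc u v ↔ ¬ arc v u)

namespace Tournament

variable {V W : Type}

/-- The backedge graph of `T` with respect to the total ordering of `V` induced by
an injective map `f : V → ℕ`: `u` and `v` are adjacent iff the arc between them
goes backwards in the ordering. -/
def backedge (T : Tournament V) (f : V → ℕ) : SimpleGraph V where
  Adj u v := (f u < f v ∧ T.arc v u) ∨ (f v < f u ∧ T.arc u v)
  symm := ⟨fun u v h => h.symm⟩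
  loopless := ⟨by
    intro v h
    rcases h with ⟨h, _⟩ | ⟨h, _⟩ <;> exact lt_irrefl _ h⟩

/-- The clique number of a tournament: the minimum over all orderings of the
clique number of the corresponding backedge graph. -/
noncomputable def cliqueNum (T : Tournament V) : ℕ :=
  sInf {n | ∃ f : V → ℕ, Function.Injective f ∧ (T.backedge f).cliqueNum = n}

/-- The subtournament induced on a set `X` of vertices. -/
def restrict (T : Tournament V) (X : Set V) : Tournament X where
  arc u v := T.arc u.1 v.1
  loopless v := T.loopless v.1
  anti u v h := T.anti u.1 v.1 (fun e => h (Subtype.ext e))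

/-- `ω⃗(X)`: the clique number of the subtournament induced on `X`. -/
noncomputable def cliqueNumOn (T : Tournament V) (X : Set V) : ℕ :=
  (T.restrict X).cliqueNum

/-- Out-neighbourhood. -/
def outN (T : Tournament V) (v : V) : Set V := {w | T.arc v w}

/-- In-neighbourhood. -/
def inN (T : Tournament V) (v : V) : Set V := {w | T.arc w v}

/-- `T.HasCopy H`: some set of vertices of `T` induces a subtournament isomorphic to `H`. -/
def HasCopy (T : Tournament V) (H : Tournament W) : Prop :=
  ∃ f : W → V, Function.Injective f ∧ ∀ u v : W, H.arc u v ↔ T.arc (f u) (f v)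

end Tournament

/-- Vertex type of the tournament `D n` (`D 0` is empty, `D 1` a single vertex). -/
def DType : ℕ → Type
  | 0 => Empty
  | n+1 => (DType n) ⊕ ((DType n) ⊕ Unit)

/-- Arcs of `D n`: `D (n+1) = Δ(X, Y, v)` with `X ⇒ Y`, `Y ⇒ v`, `v ⇒ X`,
where `X`, `Y` are copies of `D n` and `v` one extra vertex. -/
def Darc : (n : ℕ) → DType n → DType n → Prop
  | 0, x, _ => x.elim
  | n+1, Sum.inl a, Sum.inl b => Darc n a b
  | _+1, Sum.inl _, Sum.inr (Sum.inl _) => True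
  | _+1, Sum.inl _, Sum.inr (Sum.inr _) => False
  | _+1, Sum.inr (Sum.inl _), Sum.inl _ => False
  | n+1, Sum.inr (Sum.inl a), Sum.inr (Sum.inl b) => Darc n a b
  | _+1, Sum.inr (Sum.inl _), Sum.inr (Sum.inr _) => True
  | _+1, Sum.inr (Sum.inr _), Sum.inl _ => True
  | _+1, Sum.inr (Sum.inr _), Sum.inr _ => False

theorem Darc_irrefl (n : ℕ) : ∀ x : DType n, ¬ Darc n x x := by
  induction n with
  | zero => intro x; exact x.elim
  | succ n ih =>
    intro x
    match x with
    | Sum.inl a => simpa [Darc] using ih a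
    | Sum.inr (Sum.inl a) => simpa [Darc] using ih a
    | Sum.inr (Sum.inr u) => simp [Darc]

theorem Darc_anti (n : ℕ) : ∀ x y : DType n, x ≠ y → (Darc n x y ↔ ¬ Darc n y x) := by
  induction n with
  | zero => intro x; exact x.elim
  | succ n ih =>
    intro x y hxy
    match x, y with
    | Sum.inl a, Sum.inl b =>
      have hab : a ≠ b := by intro h; exact hxy (by rw [h])
      simpa [Darc] using ih a b hab
    | Sum.inl a, Sum.inr (Sum.inl b) => simp [Darc]
    | Sum.inl a, Sum.inr (Sum.inr u) => simp [Darc]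
    | Sum.inr (Sum.inl a), Sum.inl b => simp [Darc]
    | Sum.inr (Sum.inl a), Sum.inr (Sum.inl b) =>
      have hab : a ≠ b := by intro h; exact hxy (by rw [h])
      simpa [Darc] using ih a b hab
    | Sum.inr (Sum.inl a), Sum.inr (Sum.inr u) => simp [Darc]
    | Sum.inr (Sum.inr u), Sum.inl b => simp [Darc]
    | Sum.inr (Sum.inr u), Sum.inr (Sum.inl b) => simp [Darc]
    | Sum.inr (Sum.inr u), Sum.inr (Sum.inr w) =>
      exact absurd (by cases u; cases w; rfl) hxy

/-- The tournament `D n` (indexed so that `D 1` is a single vertex, and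
`D (n+1)` is `Δ(D n, D n, v)`). -/
def Dtour (n : ℕ) : Tournament (DType n) where
  arc := Darc n
  loopless := Darc_irrefl n
  anti := Darc_anti n

/-- Vertex type of the tournament `A n` (`A 0` is empty, `A 1` a single vertex):
`A (n+1)` consists of `n` copies of `A n` together with `n+1` extra vertices. -/
def AType : ℕ → Type
  | 0 => Empty
  | n+1 => (Fin n × AType n) ⊕ Fin (n+1)

/-- Arcs of `A (n+1)` (0-indexed version of the definition of Kim and Kim):
`inl (i, a)` is the vertex `a` of the copy `T_i` of `A n`, and `inr i` is the
extra vertex `v_i`.  We have `v_j ⇒ v_i` for `i < j`; `T_i ⇒ T_j` for `i < j`;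
`v_i ⇒ T_j` for `i ≤ j`; and `T_j ⇒ v_i` for `j < i`. -/
def Aarc : (n : ℕ) → AType n → AType n → Prop
  | 0, x, _ => x.elim
  | n+1, Sum.inl (i, a), Sum.inl (j, b) => (i : ℕ) < (j : ℕ) ∨ (i = j ∧ Aarc n a b)
  | _+1, Sum.inl (j, _), Sum.inr i => (j : ℕ) < (i : ℕ)
  | _+1, Sum.inr i, Sum.inl (j, _) => (i : ℕ) ≤ (j : ℕ)
  | _+1, Sum.inr i, Sum.inr j => (j : ℕ) < (i : ℕ)

theorem Aarc_irrefl (n : ℕ) : ∀ x : AType n, ¬ Aarc n x x := by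
  induction n with
  | zero => intro x; exact x.elim
  | succ n ih =>
    intro x
    match x with
    | Sum.inl (i, a) =>
      simp only [Aarc, lt_irrefl, false_or, not_and]
      intro _
      exact ih a
    | Sum.inr i => simp [Aarc]

theorem Aarc_anti (n : ℕ) : ∀ x y : AType n, x ≠ y → (Aarc n x y ↔ ¬ Aarc n y x) := by
  induction n with
  | zero => intro x; exact x.elim
  | succ n ih =>
    intro x y hxy
    match x, y with
    | Sum.inl (i, a), Sum.inl (j, b) =>
      rcases lt_trichotomy (i : ℕ) (j : ℕ) with h | h | h
      · have hne : j ≠ i := by intro e; rw [e] at h; exact lt_irrefl _ h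
        simp only [Aarc]
        constructor
        · intro _ hc
          rcases hc with hc | ⟨hc, _⟩
          · omega
          · exact hne hc
        · intro _; exact Or.inl h
      · have hij : i = j := Fin.ext h
        subst hij
        have hab : a ≠ b := by
          intro e; exact hxy (by rw [e])
        simpa [Aarc] using ih a b hab
      · have hne : i ≠ j := by intro e; rw [e] at h; exact lt_irrefl _ h
        simp only [Aarc]
        constructor
        · intro hc _
          rcases hc with hc | ⟨hc, _⟩
          · omega
          · exact hne hc
        · intro hc
          exfalso
          exact hc (Or.inl h)
    | Sum.inl (j, a), Sum.inr i => simp only [Aarc]; omega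
    | Sum.inr i, Sum.inl (j, a) => simp only [Aarc]; omega
    | Sum.inr i, Sum.inr j =>
      have hne : (i : ℕ) ≠ (j : ℕ) := fun e => hxy (by rw [Fin.ext e])
      simp only [Aarc]
      omega

/-- The tournament `A n` of Kim and Kim (indexed so that `A 1` is a single vertex). -/
def Atour (n : ℕ) : Tournament (AType n) where
  arc := Aarc n
  loopless := Aarc_irrefl n
  anti := Aarc_anti n
namespace Tournament

variable {V : Type}

/-- `M` contains a set `K` of `s` vertices such that every arc of `T[K]` is heavy,
as witnessed by a mountain (in the sense of the predicate `mtn`) inside `M`. -/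
def HasHeavyClique (T : Tournament V) (mtn : Set V → Prop) (s : ℕ) (M : Set V) : Prop :=
  ∃ K ⊆ M, K.ncard = s ∧ ∀ u ∈ K, ∀ v ∈ K, T.arc u v →
    ∃ M' ⊆ M, mtn M' ∧ (∀ m ∈ M', T.arc m u) ∧ (∀ m ∈ M', T.arc v m)

/-- `M` is minimal subject to containing an `(r,s)`-clique (heaviness being
witnessed by `r`-mountains, given by the predicate `mtn`, inside `M`). -/
def IsRSMtnAux (T : Tournament V) (mtn : Set V → Prop) (s : ℕ) (M : Set V) : Prop :=
  T.HasHeavyClique mtn s M ∧ ∀ M' ⊆ M, T.HasHeavyClique mtn s M' → M' = M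

/-- `T.IsMtn r M`: the set `M` induces an `r`-mountain.  A `1`-mountain is a single
vertex, and an `(r+1)`-mountain (for `r ≥ 1`) is an `(r, r+1)`-mountain, i.e. a minimal
set containing `r+1` vertices all of whose arcs are `r`-heavy within the set. -/
def IsMtn (T : Tournament V) : ℕ → Set V → Prop
  | 0 => fun _ => False
  | 1 => fun M => ∃ v, M = {v}
  | (r+2) => T.IsRSMtnAux (T.IsMtn (r+1)) (r+2)

/-- `T.IsRSMtn r s M`: the set `M` induces an `(r,s)`-mountain, i.e. a minimal set
containing an `(r,s)`-clique (with heaviness witnessed by `r`-mountains inside the set). -/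
def IsRSMtn (T : Tournament V) (r s : ℕ) (M : Set V) : Prop :=
  T.IsRSMtnAux (T.IsMtn r) s M

/-- A `(c,a)`-ω⃗-bag-chain: pairwise disjoint bags of clique number exactly `c`,
with all "wrong direction" neighbourhoods between bags of clique number less than `a`. -/
def IsBagChain (T : Tournament V) (c a : ℕ) {t : ℕ} (B : Fin t → Set V) : Prop :=
  (∀ i j : Fin t, i ≠ j → Disjoint (B i) (B j)) ∧
  (∀ i, T.cliqueNumOn (B i) = c) ∧
  (∀ i j : Fin t, i < j →
    (∀ v ∈ B j, T.cliqueNumOn (T.outN v ∩ B i) < a) ∧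
    (∀ w ∈ B i, T.cliqueNumOn (T.inN w ∩ B j) < a))

/-- A `(c,a)`-near-bag-chain: pairwise disjoint bags of clique number at most `c`,
such that for every vertex the "wrong direction" neighbours in the union of the other
bags have clique number at most `a`. -/
def IsNearBagChain (T : Tournament V) (c a : ℕ) {t : ℕ} (Q : Fin t → Set V) : Prop :=
  (∀ i j : Fin t, i ≠ j → Disjoint (Q i) (Q j)) ∧
  (∀ i, T.cliqueNumOn (Q i) ≤ c) ∧
  (∀ i : Fin t, ∀ v ∈ Q i,
    T.cliqueNumOn (T.inN v ∩ ⋃ j, ⋃ (_ : i < j), Q j) ≤ a ∧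
    T.cliqueNumOn (T.outN v ∩ ⋃ j, ⋃ (_ : j < i), Q j) ≤ a)

end Tournament

/-- The Ramsey number `R(x,y)`: the least `N` such that every graph on `N` vertices
contains a clique of size `x` or an independent set of size `y` (equivalently, every
red/blue colouring of the edges of `K_N` contains a red `K_x` or a blue `K_y`). -/
noncomputable def ramseyNumber (x y : ℕ) : ℕ :=
  sInf {N | ∀ G : SimpleGraph (Fin N),
    (∃ s, G.IsNClique x s) ∨ (∃ s, Gᶜ.IsNClique y s)}

/-!
Split `B` according to whether `ω⃗(N⁺(w) ∩ A) < c`. If the part where this holds has clique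
number below `c_large`, then, `ω⃗` being subadditive, the other part has clique number at least
`g((1 + |D_{n-1}|) c_small)`, so it contains a vertex `w` with
`ω⃗(N⁻(w) ∩ B) ≥ (1 + |D_{n-1}|) c_small` and `ω⃗(N⁺(w) ∩ A) ≥ c`. The latter set holds a copy `X`
of `D_{n-1}`. As `X ⊆ A`, each `N⁻(x) ∩ B` with `x ∈ X` has clique number below `c_small`, so
removing them from `N⁻(w) ∩ B` leaves clique number at least `c_small ≥ c`, hence a second copy `Y`
of `D_{n-1}` with `X ⇒ Y ⇒ w ⇒ X`: together they form a copy of `D_n`.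
-/

instance instFiniteDType : (n : ℕ) → Finite (DType n)
  | 0 => inferInstanceAs (Finite Empty)
  | n + 1 =>
    have := instFiniteDType n
    inferInstanceAs (Finite (DType n ⊕ (DType n ⊕ Unit)))

namespace SimpleGraph

variable {α β : Type*}

lemma cliqueNum_comap_le [Finite α] (G : SimpleGraph α) {φ : β → α} (hφ : Function.Injective φ) :
    (G.comap φ).cliqueNum ≤ G.cliqueNum := by
  obtain ⟨s, hs⟩ := (G.comap φ).exists_isNClique_cliqueNum
  have hclique : G.IsClique (s.map ⟨φ, hφ⟩ : Set α) := by
    rintro _ ha _ hb hab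
    simp only [Finset.coe_map, Function.Embedding.coeFn_mk, Set.mem_image, Finset.mem_coe] at ha hb
    obtain ⟨a, ha, rfl⟩ := ha
    obtain ⟨b, hb, rfl⟩ := hb
    exact hs.isClique ha hb (ne_of_apply_ne φ hab)
  rw [← hs.card_eq, ← Finset.card_map ⟨φ, hφ⟩]
  exact hclique.card_le_cliqueNum

lemma IsClique.card_filter_le_cliqueNum_induce [Finite α] {G : SimpleGraph α} {s : Finset α}
    (hs : G.IsClique (s : Set α)) (P : Set α) [DecidablePred (· ∈ P)] :
    (s.filter (· ∈ P)).card ≤ (G.induce P).cliqueNum := by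
  rw [← Finset.card_subtype]
  refine IsClique.card_le_cliqueNum (tc := ?_)
  rw [isClique_induce_iff]
  exact hs.subset (by intro x; simp +contextual)

lemma cliqueNum_le_induce_add_induce_compl [Finite α] (G : SimpleGraph α) (P : Set α) :
    G.cliqueNum ≤ (G.induce P).cliqueNum + (G.induce Pᶜ).cliqueNum := by
  classical
  obtain ⟨s, hs⟩ := G.exists_isNClique_cliqueNum
  rw [← hs.card_eq, ← Finset.card_filter_add_card_filter_not (· ∈ P)]
  exact add_le_add (hs.isClique.card_filter_le_cliqueNum_induce P)
    (hs.isClique.card_filter_le_cliqueNum_induce Pᶜ)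

end SimpleGraph

namespace Tournament

variable {V W : Type} (T : Tournament V)

lemma arc_asymm {u v : V} (h : T.arc u v) : ¬ T.arc v u :=
  (T.anti u v fun e => T.loopless v (e ▸ h)).1 h

lemma arc_of_not_arc {u v : V} (hne : u ≠ v) (h : ¬ T.arc v u) : T.arc u v :=
  (T.anti u v hne).2 h

lemma injective_of_arc_iff {H : Tournament W} {φ : W → V}
    (harc : ∀ u v, H.arc u v ↔ T.arc (φ u) (φ v)) : Function.Injective φ := by
  intro u v huv
  by_contra hne
  by_cases h : H.arc u v
  · exact T.loopless (φ v) (huv ▸ (harc u v).1 h)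
  · exact T.loopless (φ v) (huv ▸ (harc v u).1 (H.arc_of_not_arc (Ne.symm hne) h))

lemma backedge_eq_comap {H : Tournament W} {φ : W → V}
    (harc : ∀ u v, H.arc u v ↔ T.arc (φ u) (φ v)) {f : V → ℕ} {g : W → ℕ}
    (hfg : ∀ u v, g u < g v ↔ f (φ u) < f (φ v)) :
    H.backedge g = (T.backedge f).comap φ := by
  ext u v
  simp only [backedge, SimpleGraph.comap_adj, hfg, harc]

lemma exists_backedge_cliqueNum_eq [Countable V] :
    ∃ f : V → ℕ, Function.Injective f ∧ (T.backedge f).cliqueNum = T.cliqueNum :=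
  Nat.sInf_mem (s := {n | ∃ f : V → ℕ, Function.Injective f ∧ (T.backedge f).cliqueNum = n})
    (by obtain ⟨f, hf⟩ := Countable.exists_injective_nat V; exact ⟨_, f, hf, rfl⟩)

lemma cliqueNum_le_of_arc_iff [Finite V] {H : Tournament W} {φ : W → V}
    (harc : ∀ u v, H.arc u v ↔ T.arc (φ u) (φ v)) : H.cliqueNum ≤ T.cliqueNum := by
  obtain ⟨f, hf, hfT⟩ := T.exists_backedge_cliqueNum_eq
  have hφ := T.injective_of_arc_iff harc
  calc H.cliqueNum ≤ (H.backedge (f ∘ φ)).cliqueNum := Nat.sInf_le ⟨_, hf.comp hφ, rfl⟩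
    _ = ((T.backedge f).comap φ).cliqueNum := by
      rw [T.backedge_eq_comap harc (g := f ∘ φ) fun _ _ => Iff.rfl]
    _ ≤ T.cliqueNum := hfT ▸ SimpleGraph.cliqueNum_comap_le _ hφ

lemma cliqueNumOn_restrict_le [Finite V] {X Y : Set V} {S : Set X} (h : ∀ x ∈ S, x.1 ∈ Y) :
    (T.restrict X).cliqueNumOn S ≤ T.cliqueNumOn Y :=
  (T.restrict Y).cliqueNum_le_of_arc_iff (H := (T.restrict X).restrict S)
    (φ := fun x => ⟨x.1.1, h x.1 x.2⟩) fun _ _ => Iff.rfl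

lemma cliqueNumOn_mono [Finite V] {X Y : Set V} (h : X ⊆ Y) :
    T.cliqueNumOn X ≤ T.cliqueNumOn Y :=
  (T.restrict Y).cliqueNum_le_of_arc_iff (H := T.restrict X) (φ := Set.inclusion h)
    fun _ _ => Iff.rfl

/-- Interleave optimal orderings of `P` and `Pᶜ` by parity: a backedge clique of the result
splits into backedge cliques of the two orderings. -/
lemma cliqueNum_le_cliqueNumOn_add_compl [Finite V] (P : Set V) :
    T.cliqueNum ≤ T.cliqueNumOn P + T.cliqueNumOn Pᶜ := by
  classical
  obtain ⟨f₁, hf₁, hf₁T⟩ := (T.restrict P).exists_backedge_cliqueNum_eq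
  obtain ⟨f₂, hf₂, hf₂T⟩ := (T.restrict Pᶜ).exists_backedge_cliqueNum_eq
  let f : V → ℕ := fun v => if h : v ∈ P then 2 * f₁ ⟨v, h⟩ else 2 * f₂ ⟨v, h⟩ + 1
  have hf : Function.Injective f := by
    intro u v huv
    simp only [f] at huv
    split_ifs at huv with hu hv hv
    · exact congrArg Subtype.val (hf₁ (show f₁ ⟨u, hu⟩ = f₁ ⟨v, hv⟩ by omega))
    · omega
    · omega
    · exact congrArg Subtype.val (hf₂ (show f₂ ⟨u, hu⟩ = f₂ ⟨v, hv⟩ by omega))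
  have h₁ : (T.restrict P).backedge f₁ = (T.backedge f).induce P :=
    T.backedge_eq_comap (H := T.restrict P) (φ := Subtype.val) (fun _ _ => Iff.rfl)
      fun u v => by simp [f, u.2, v.2]
  have h₂ : (T.restrict Pᶜ).backedge f₂ = (T.backedge f).induce Pᶜ :=
    T.backedge_eq_comap (H := T.restrict Pᶜ) (φ := Subtype.val) (fun _ _ => Iff.rfl)
      fun u v => by simp [f, show u.1 ∉ P from u.2, show v.1 ∉ P from v.2]
  calc T.cliqueNum ≤ (T.backedge f).cliqueNum := Nat.sInf_le ⟨f, hf, rfl⟩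
    _ ≤ _ := (T.backedge f).cliqueNum_le_induce_add_induce_compl P
    _ = T.cliqueNumOn P + T.cliqueNumOn Pᶜ := by
      rw [cliqueNumOn, cliqueNumOn, ← hf₁T, ← hf₂T, h₁, h₂]

lemma cliqueNumOn_le_inter_add_diff [Finite V] (X P : Set V) :
    T.cliqueNumOn X ≤ T.cliqueNumOn (X ∩ P) + T.cliqueNumOn (X \ P) := by
  refine ((T.restrict X).cliqueNum_le_cliqueNumOn_add_compl {x | x.1 ∈ P}).trans
    (add_le_add ?_ ?_)
  · exact T.cliqueNumOn_restrict_le fun x hx => ⟨x.2, hx⟩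
  · exact T.cliqueNumOn_restrict_le fun x hx => ⟨x.2, hx⟩

lemma cliqueNum_eq_zero_of_isEmpty [IsEmpty V] : T.cliqueNum = 0 := by
  obtain ⟨f, -, hfT⟩ := T.exists_backedge_cliqueNum_eq
  obtain ⟨s, hs⟩ := (T.backedge f).exists_isNClique_cliqueNum
  rw [← hfT, ← hs.card_eq, Finset.eq_empty_of_isEmpty s, Finset.card_empty]

lemma cliqueNumOn_biUnion_le_sum [Finite V] {ι : Type} (s : Finset ι) (F : ι → Set V) :
    T.cliqueNumOn (⋃ i ∈ s, F i) ≤ ∑ i ∈ s, T.cliqueNumOn (F i) := by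
  classical
  induction s using Finset.induction_on with
  | empty => simp [cliqueNumOn, cliqueNum_eq_zero_of_isEmpty]
  | insert a s ha ih =>
    rw [Finset.set_biUnion_insert, Finset.sum_insert ha]
    refine (T.cliqueNumOn_le_inter_add_diff _ (F a)).trans (add_le_add ?_ ?_)
    · exact T.cliqueNumOn_mono Set.inter_subset_right
    · exact (T.cliqueNumOn_mono (by simp)).trans ih

lemma cliqueNumOn_iUnion_le [Finite V] {ι : Type} [Finite ι] (F : ι → Set V) {k : ℕ}
    (hk : ∀ i, T.cliqueNumOn (F i) ≤ k) : T.cliqueNumOn (⋃ i, F i) ≤ Nat.card ι * k := by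
  have := Fintype.ofFinite ι
  calc T.cliqueNumOn (⋃ i, F i) = T.cliqueNumOn (⋃ i ∈ Finset.univ, F i) := by simp
    _ ≤ ∑ i, T.cliqueNumOn (F i) := T.cliqueNumOn_biUnion_le_sum _ F
    _ ≤ ∑ _i : ι, k := Finset.sum_le_sum fun i _ => hk i
    _ = Nat.card ι * k := by simp [Nat.card_eq_fintype_card]

lemma hasCopy_Dtour_succ {m : ℕ} {f₁ f₂ : DType m → V} {w : V}
    (h₁ : ∀ a b, (Dtour m).arc a b ↔ T.arc (f₁ a) (f₁ b))
    (h₂ : ∀ a b, (Dtour m).arc a b ↔ T.arc (f₂ a) (f₂ b))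
    (h₁₂ : ∀ a b, T.arc (f₁ a) (f₂ b)) (h₂w : ∀ b, T.arc (f₂ b) w)
    (hw₁ : ∀ a, T.arc w (f₁ a)) : T.HasCopy (Dtour (m + 1)) := by
  let F : DType (m + 1) → V := Sum.elim f₁ (Sum.elim f₂ fun _ => w)
  have hF : ∀ u v, (Dtour (m + 1)).arc u v ↔ T.arc (F u) (F v) := by
    rintro (a | a | ⟨⟩) (b | b | ⟨⟩)
    · exact h₁ a b
    · exact iff_of_true trivial (h₁₂ a b)
    · exact iff_of_false not_false (T.arc_asymm (hw₁ a))
    · exact iff_of_false not_false (T.arc_asymm (h₁₂ b a))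
    · exact h₂ a b
    · exact iff_of_true trivial (h₂w a)
    · exact iff_of_true trivial (hw₁ b)
    · exact iff_of_false not_false (T.arc_asymm (h₂w b))
    · exact iff_of_false not_false (T.loopless w)
  exact ⟨F, T.injective_of_arc_iff hF, hF⟩

theorem hasCopy_Dtour_succ_of_cliqueNumOn [Finite V] {m c csmall : ℕ}
    (hsub : ∀ X : Set V, c ≤ T.cliqueNumOn X → (T.restrict X).HasCopy (Dtour m))
    (hcs : c ≤ csmall) {A B : Set V} (hAB : Disjoint A B)
    (hback : ∀ v ∈ A, T.cliqueNumOn (T.inN v ∩ B) < csmall) {w : V}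
    (hout : c ≤ T.cliqueNumOn (T.outN w ∩ A))
    (hin : (1 + Nat.card (DType m)) * csmall ≤ T.cliqueNumOn (T.inN w ∩ B)) :
    T.HasCopy (Dtour (m + 1)) := by
  obtain ⟨f₁, -, hf₁⟩ := hsub _ hout
  set U := ⋃ a, T.inN (f₁ a).1
  have hU : T.cliqueNumOn (T.inN w ∩ B ∩ U) ≤ Nat.card (DType m) * csmall := by
    rw [Set.inter_iUnion]
    refine T.cliqueNumOn_iUnion_le _ fun a => le_of_lt ?_
    have hmono : T.inN w ∩ B ∩ T.inN (f₁ a) ⊆ T.inN (f₁ a) ∩ B := fun _ hx => ⟨hx.2, hx.1.2⟩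
    exact (T.cliqueNumOn_mono hmono).trans_lt (hback _ (f₁ a).2.2)
  have hY : c ≤ T.cliqueNumOn ((T.inN w ∩ B) \ U) := by
    have := T.cliqueNumOn_le_inter_add_diff (T.inN w ∩ B) U
    rw [add_mul, one_mul] at hin
    omega
  obtain ⟨f₂, -, hf₂⟩ := hsub _ hY
  refine T.hasCopy_Dtour_succ (f₁ := fun a => (f₁ a).1) (f₂ := fun b => (f₂ b).1) hf₁ hf₂
    (fun a b => T.arc_of_not_arc ?_ fun h => (f₂ b).2.2 (Set.mem_iUnion.2 ⟨a, h⟩))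
    (fun b => (f₂ b).2.1.1) (fun a => (f₁ a).2.1)
  exact hAB.ne_of_mem (f₁ a).2.2 (f₂ b).2.1.2

end Tournament

open Tournament in
theorem stmt_12_general {V : Type} [Fintype V] (n : ℕ) (hn : 2 ≤ n) (g : ℕ → ℕ)
    (hg : ∀ b : ℕ, ∀ (W : Type) [Fintype W] (T' : Tournament W), g b ≤ T'.cliqueNum →
      (∃ v : W, b ≤ T'.cliqueNumOn (T'.outN v)) ∧
      (∃ w : W, b ≤ T'.cliqueNumOn (T'.inN w)))
    (T : Tournament V) (c : ℕ)
    (hsub : ∀ X : Set V, c ≤ T.cliqueNumOn X → (T.restrict X).HasCopy (Dtour (n - 1)))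
    (csmall clarge : ℕ) (hcs : c ≤ csmall)
    (A B : Set V) (hAB : Disjoint A B)
    (hB : clarge + g ((1 + Nat.card (DType (n - 1))) * csmall) ≤ T.cliqueNumOn B)
    (hback : ∀ v ∈ A, T.cliqueNumOn (T.inN v ∩ B) < csmall) :
    T.HasCopy (Dtour n) ∨
      ∃ B₂ ⊆ B, clarge ≤ T.cliqueNumOn B₂ ∧
        ∀ w ∈ B₂, T.cliqueNumOn (T.outN w ∩ A) < c := by
  classical
  obtain ⟨m, rfl⟩ : ∃ m, n = m + 1 := ⟨n - 1, by omega⟩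
  rw [Nat.add_sub_cancel] at hsub hB
  set P : Set V := {w | T.cliqueNumOn (T.outN w ∩ A) < c}
  by_cases hB₂ : clarge ≤ T.cliqueNumOn (B ∩ P)
  · exact Or.inr ⟨B ∩ P, Set.inter_subset_left, hB₂, fun w hw => hw.2⟩
  have hB₁ : g ((1 + Nat.card (DType m)) * csmall) ≤ T.cliqueNumOn (B \ P) := by
    have := T.cliqueNumOn_le_inter_add_diff B P
    omega
  obtain ⟨⟨w, hwB, hwP⟩, hw⟩ := (hg _ _ (T.restrict (B \ P)) hB₁).2
  refine Or.inl (T.hasCopy_Dtour_succ_of_cliqueNumOn hsub hcs hAB hback (not_lt.1 hwP) ?_)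
  exact hw.trans (T.cliqueNumOn_restrict_le fun x hx => ⟨hx, x.2.1⟩)

open Tournament in
/-- Lemma (turning a half-bag-chain into a bag-chain). -/
theorem stmt_12 {V : Type} [Fintype V] (n : ℕ) (hn : 2 ≤ n) (g : ℕ → ℕ)
    (hg : ∀ b : ℕ, ∀ (W : Type) [Fintype W] (T' : Tournament W), g b ≤ T'.cliqueNum →
      (∃ v : W, b ≤ T'.cliqueNumOn (T'.outN v)) ∧
      (∃ w : W, b ≤ T'.cliqueNumOn (T'.inN w)))
    (T : Tournament V) (c : ℕ)
    (hsub : ∀ X : Set V, c ≤ T.cliqueNumOn X → (T.restrict X).HasCopy (Dtour (n - 1)))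
    (csmall clarge : ℕ) (hcs : c ≤ csmall)
    (A B : Set V) (hAB : Disjoint A B)
    (hA : clarge ≤ T.cliqueNumOn A)
    (hB : clarge + g ((1 + Nat.card (DType (n - 1))) * csmall) ≤ T.cliqueNumOn B)
    (hback : ∀ v ∈ A, T.cliqueNumOn (T.inN v ∩ B) < csmall) :
    T.HasCopy (Dtour n) ∨
      ∃ B₂ ⊆ B, clarge ≤ T.cliqueNumOn B₂ ∧
        ∀ w ∈ B₂, T.cliqueNumOn (T.outN w ∩ A) < c :=
  stmt_12_general n hn g hg T c hsub csmall clarge hcs A B hAB hB hback
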